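/- arXiv:math/0109079 — 5 statements merged into one kernel-verified Lean document; each statement's English description precedes it below -/
import Mathlib

section
/- For every real q ≥ 2 and every integer d ≥ 1, 1 - 1/q - 1/q^2 ≤ ∏_{i=1}^d (1 - 1/q^i). -/
open Finset

noncomputable section

/-- The q-Pochhammer-type product `(1/q)_m = ∏_{k=1}^m (1 - 1/q^k)`. -/
def qPoch (q : ℝ) (m : ℕ) : ℝ := ∏ k ∈ Finset.Icc 1 m, (1 - 1/q^k)

/-- `conjPart l j = λ'_j`, the `j`-th part of the conjugate partition
(the number of parts of `l` that are at least `j`). -/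
def conjPart {n : ℕ} (l : n.Partition) (j : ℕ) : ℕ :=
  Multiset.countP (fun p => j ≤ p) l.parts

/-- `rowLen l i = λ_i`, the `i`-th largest part of `l` (1-indexed, `0` if `i` exceeds
the number of parts). -/
def rowLen {n : ℕ} (l : n.Partition) (i : ℕ) : ℕ :=
  ((Finset.Icc 1 n).filter (fun j => i ≤ conjPart l j)).card

/-- The Young diagram of `l`, as the set of cells `(i,j)` (row `i`, column `j`,
both 1-indexed) with `1 ≤ j ≤ λ_i`. -/
def cells {n : ℕ} (l : n.Partition) : Finset (ℕ × ℕ) :=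
  (Finset.Icc 1 n ×ˢ Finset.Icc 1 n).filter (fun s => s.2 ≤ rowLen l s.1)

/-- The arm length `a(s) = λ_i - j` of the cell `s = (i,j)`. -/
def arm {n : ℕ} (l : n.Partition) (s : ℕ × ℕ) : ℕ := rowLen l s.1 - s.2

/-- The leg length `l(s) = λ'_j - i` of the cell `s = (i,j)`. -/
def leg {n : ℕ} (l : n.Partition) (s : ℕ × ℕ) : ℕ := conjPart l s.2 - s.1

/-- The hook length `h(s) = a(s) + l(s) + 1` of the cell `s`. -/
def hookLen {n : ℕ} (l : n.Partition) (s : ℕ × ℕ) : ℕ := arm l s + leg l s + 1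

/-- `n(λ) = ∑_i (i-1) λ_i`. -/
def nStat {n : ℕ} (l : n.Partition) : ℕ := ∑ i ∈ Finset.Icc 1 n, (i - 1) * rowLen l i

/-- The multiplicity `m_j(λ)` of `j` as a part of `l`. -/
def mult {n : ℕ} (l : n.Partition) (j : ℕ) : ℕ := Multiset.count j l.parts

/-- The denominator `∏_j q^{(λ'_j)^2} (1/q)_{m_j(λ)}` appearing in the measure `P_{n,q}`. -/
def Pden (q : ℝ) {n : ℕ} (l : n.Partition) : ℝ :=
  ∏ j ∈ Finset.Icc 1 n, q ^ ((conjPart l j)^2) * qPoch q (mult l j)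

/-- The measure `P_{n,q}(λ) = q^n (1/q)_n / ∏_j q^{(λ'_j)^2} (1/q)_{m_j(λ)}`. -/
def Pmeas (q : ℝ) {n : ℕ} (l : n.Partition) : ℝ := q^n * qPoch q n / Pden q l

/-- `z(n,q)`: the coefficient of `u^n` in the formal expansion of
`∏_{i≥1} ∏_{j≥0} 1/(1 - u/q^{i+j})`, obtained by expanding each factor
as a geometric series and collecting terms of total degree `n`. -/
def zCoeff (n : ℕ) (q : ℝ) : ℝ :=
  ∑' f : {f : (ℕ × ℕ) →₀ ℕ // (f.sum fun _ k => k) = n},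
    ∏ p ∈ (f : (ℕ × ℕ) →₀ ℕ).support,
      ((1 : ℝ) / q ^ ((p.1 + 1) + p.2)) ^ ((f : (ℕ × ℕ) →₀ ℕ) p)

/-- The measure `Q_{n,q}(λ) = (1/z(n,q)) / (q^{|λ|+2n(λ)} ∏_{s∈λ} (1-1/q^{h(s)})^2)`. -/
def Qmeas (q : ℝ) {n : ℕ} (l : n.Partition) : ℝ :=
  (1 / zCoeff n q) *
    (1 / (q ^ (n + 2 * nStat l) * ∏ s ∈ cells l, (1 - 1/q^(hookLen l s))^2))

/-- `P_{n,q}^r`: the `P_{n,q}`-probability that the largest part of `λ` is `< r`. -/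
def Ptail (n : ℕ) (q : ℝ) (r : ℕ) : ℝ :=
  ∑ l ∈ Finset.univ.filter (fun l : n.Partition => ∀ p ∈ l.parts, p < r), Pmeas q l

end

/-- The error term `x^(d+1)` is what makes the induction close: with `c = 1 - x - x^2`,
`(c + x^(d+1)) (1 - x^(d+1)) - (c + x^(d+2)) = x^(d+1) (x^2 - x^(d+1)) ≥ 0`. -/
theorem one_sub_sub_sq_add_pow_le_prod_one_sub_pow {x : ℝ} (hx₀ : 0 ≤ x) (hx₁ : x ≤ 1)
    {d : ℕ} (hd : 1 ≤ d) :
    1 - x - x ^ 2 + x ^ (d + 1) ≤ ∏ i ∈ Icc 1 d, (1 - x ^ i) := by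
  induction d, hd using Nat.le_induction with
  | base => rw [Icc_self, prod_singleton]; exact le_of_eq (by ring)
  | succ d hd ih =>
    rw [prod_Icc_succ_top (by omega)]
    have h_factor : 0 ≤ 1 - x ^ (d + 1) := sub_nonneg.2 (pow_le_one₀ hx₀ hx₁)
    have h_tail : x ^ (d + 1) ≤ x ^ 2 := pow_le_pow_of_le_one hx₀ hx₁ (by omega)
    calc 1 - x - x ^ 2 + x ^ (d + 1 + 1)
        ≤ (1 - x - x ^ 2 + x ^ (d + 1)) * (1 - x ^ (d + 1)) := by
          rw [pow_succ x (d + 1)]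
          linear_combination (mul_nonneg (pow_nonneg hx₀ (d + 1)) (sub_nonneg.2 h_tail))
      _ ≤ (∏ i ∈ Icc 1 d, (1 - x ^ i)) * (1 - x ^ (d + 1)) :=
          mul_le_mul_of_nonneg_right ih h_factor

theorem stmt1 (q : ℝ) (hq : 2 ≤ q) (d : ℕ) (hd : 1 ≤ d) :
    1 - 1/q - 1/q^2 ≤ ∏ i ∈ Finset.Icc 1 d, (1 - 1/q^i) := by
  have hx₀ : 0 ≤ 1 / q := by positivity
  have hx₁ : 1 / q ≤ 1 := (div_le_one₀ (by linarith)).2 (by linarith)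
  have h := one_sub_sub_sq_add_pow_le_prod_one_sub_pow hx₀ hx₁ hd
  simp only [one_div_pow] at h
  have : 0 ≤ 1 / q ^ (d + 1) := by positivity
  linarith
end

section
/- For real q ≥ 2, the double infinite product ∏_{i=1}^∞ ∏_{j=0}^∞ (1 - 1/q^{i+j}) is at least (1 - 1/q)^4. -/
open Finset

noncomputable section

/-!
Put `x = 1/q ≤ 1/2`. The Weierstrass inequality `∏ (1 - e_k) ≥ 1 - ∑ e_k` and a geometric tail
bound give `∏_{k ≥ m} (1 - x^k) ≥ 1 - x^m/(1 - x)`. For `m ≥ 2` this is at least `1 - x^(m-1)`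
because `x ≤ 1 - x`; splitting off the factor `1 - x` it also gives `∏_{k ≥ 1} (1 - x^k) ≥ (1 - x)^2`.
Hence the row `i = 1` of the double product is at least `(1 - x)^2`, and the rows `i ≥ 2` together
are at least `∏_{k ≥ 1} (1 - x^k) ≥ (1 - x)^2`.
-/

open Finset

theorem Finset.one_sub_sum_le_prod_one_sub {ι R : Type*} [CommRing R] [LinearOrder R]
    [IsStrictOrderedRing R] (s : Finset ι) {e : ι → R} (he₀ : ∀ i ∈ s, 0 ≤ e i)
    (he₁ : ∀ i ∈ s, e i ≤ 1) : 1 - ∑ i ∈ s, e i ≤ ∏ i ∈ s, (1 - e i) := by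
  classical
  induction s using Finset.induction_on with
  | empty => simp
  | insert a s ha ih =>
    rw [sum_insert ha, prod_insert ha]
    have ha₀ := he₀ a (mem_insert_self a s)
    have ha₁ := he₁ a (mem_insert_self a s)
    have hs₀ : 0 ≤ ∑ i ∈ s, e i := sum_nonneg fun i hi ↦ he₀ i (mem_insert_of_mem hi)
    have ih' := ih (fun i hi ↦ he₀ i (mem_insert_of_mem hi)) fun i hi ↦ he₁ i (mem_insert_of_mem hi)
    calc 1 - (e a + ∑ i ∈ s, e i) ≤ (1 - e a) * (1 - ∑ i ∈ s, e i) := by nlinarith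
      _ ≤ (1 - e a) * ∏ i ∈ s, (1 - e i) := mul_le_mul_of_nonneg_left ih' (by linarith)

/-- `c ≤ 1` covers the case where the product does not converge, so that `tprod` is `1`. -/
theorem le_tprod_of_le_prod_range {α : Type*} [CommMonoid α] [TopologicalSpace α] [Preorder α]
    [ClosedIciTopology α] {f : ℕ → α} {c : α} (hc : c ≤ 1)
    (h : ∀ n, c ≤ ∏ i ∈ range n, f i) : c ≤ ∏' i, f i := by
  by_cases hf : Multipliable f
  · exact ge_of_tendsto' hf.hasProd.tendsto_prod_nat h
  · rwa [tprod_eq_one_of_not_multipliable hf]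

section GeometricProducts

variable {x : ℝ}

theorem one_sub_pow_div_le_prod_range (hx₀ : 0 ≤ x) (hx₁ : x < 1) (m n : ℕ) :
    1 - x ^ m / (1 - x) ≤ ∏ j ∈ range n, (1 - x ^ (m + j)) := by
  have hsum : ∑ j ∈ range n, x ^ (m + j) ≤ x ^ m / (1 - x) := by
    have h := geom_sum_Ico_le_of_lt_one (m := m) (n := m + n) hx₀ hx₁
    rwa [sum_Ico_eq_sum_range, add_tsub_cancel_left] at h
  calc 1 - x ^ m / (1 - x) ≤ 1 - ∑ j ∈ range n, x ^ (m + j) := by linarith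
    _ ≤ ∏ j ∈ range n, (1 - x ^ (m + j)) :=
      (range n).one_sub_sum_le_prod_one_sub (fun _ _ ↦ by positivity)
        fun _ _ ↦ pow_le_one₀ hx₀ hx₁.le

theorem one_sub_pow_div_le_tprod (hx₀ : 0 ≤ x) (hx₁ : x < 1) (m : ℕ) :
    1 - x ^ m / (1 - x) ≤ ∏' j, (1 - x ^ (m + j)) :=
  le_tprod_of_le_prod_range (sub_le_self _ (div_nonneg (pow_nonneg hx₀ m) (by linarith)))
    (one_sub_pow_div_le_prod_range hx₀ hx₁ m)

theorem one_sub_pow_le_tprod (hx₀ : 0 ≤ x) (hx : x ≤ 1 / 2) (m : ℕ) :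
    1 - x ^ m ≤ ∏' j, (1 - x ^ (m + 1 + j)) := by
  refine le_trans ?_ (one_sub_pow_div_le_tprod hx₀ (by linarith) (m + 1))
  have : x ^ (m + 1) / (1 - x) ≤ x ^ m := by
    rw [div_le_iff₀ (by linarith), pow_succ]
    nlinarith [pow_nonneg hx₀ m]
  linarith

theorem sq_one_sub_le_prod_range (hx₀ : 0 ≤ x) (hx : x ≤ 1 / 2) (n : ℕ) :
    (1 - x) ^ 2 ≤ ∏ j ∈ range n, (1 - x ^ (1 + j)) := by
  cases n with
  | zero =>
    rw [prod_range_zero]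
    exact pow_le_one₀ (by linarith) (by linarith)
  | succ n =>
    have htail : 1 - x ≤ ∏ j ∈ range n, (1 - x ^ (2 + j)) := by
      refine le_trans ?_ (one_sub_pow_div_le_prod_range hx₀ (by linarith) 2 n)
      have : x ^ 2 / (1 - x) ≤ x := by
        rw [div_le_iff₀ (by linarith)]
        nlinarith
      linarith
    have hexp : ∀ j, 1 + (j + 1) = 2 + j := fun j ↦ by omega
    rw [prod_range_succ']
    simp only [hexp, add_zero, pow_one]
    nlinarith

theorem sq_one_sub_le_tprod (hx₀ : 0 ≤ x) (hx : x ≤ 1 / 2) :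
    (1 - x) ^ 2 ≤ ∏' j, (1 - x ^ (1 + j)) :=
  le_tprod_of_le_prod_range (pow_le_one₀ (by linarith) (by linarith))
    (sq_one_sub_le_prod_range hx₀ hx)

end GeometricProducts

theorem stmt3 (q : ℝ) (hq : 2 ≤ q) :
    (1 - 1/q)^4 ≤ ∏' i : ℕ, ∏' j : ℕ, (1 - 1/q^((i + 1) + j)) := by
  simp only [← one_div_pow]
  set x := 1 / q
  have hx₀ : 0 ≤ x := by positivity
  have hx : x ≤ 1 / 2 := one_div_le_one_div_of_le (by norm_num) hq
  have h1x : 1 - x ≤ 1 := by linarith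
  have hfirst : (1 - x) ^ 2 ≤ ∏' j, (1 - x ^ (0 + 1 + j)) := by
    simpa only [zero_add] using sq_one_sub_le_tprod hx₀ hx
  refine le_tprod_of_le_prod_range (pow_le_one₀ (by linarith) h1x) fun n ↦ ?_
  cases n with
  | zero =>
    rw [prod_range_zero]
    exact pow_le_one₀ (by linarith) h1x
  | succ n =>
    have hrest : (1 - x) ^ 2 ≤ ∏ i ∈ range n, ∏' j, (1 - x ^ (i + 1 + 1 + j)) :=
      (sq_one_sub_le_prod_range hx₀ hx n).trans <| prod_le_prod
        (fun i _ ↦ sub_nonneg.2 (pow_le_one₀ hx₀ (by linarith)))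
        fun i _ ↦ by simpa only [add_comm 1 i] using one_sub_pow_le_tprod hx₀ hx (i + 1)
    rw [prod_range_succ']
    nlinarith
end
end

section
/- For a partition λ of n and any fixed positive integer h, the number of cells s in the Young diagram of λ whose hook length equals h is at most √(2n). -/
open Finset

/-! For a cell `s = (i, j)` one has `h(s) + i + j = λᵢ + λ'ⱼ + 1`, and both `λ` and `λ'` are
non-increasing, so no two distinct cells of the same hook length lie weakly south-east of one
another. The `k` cells of hook length `h` therefore occupy `k` distinct rows and `k` distinct
columns. Their columns are distinct positive integers, each at most the length of its row, so
`k (k + 1) / 2 ≤ ∑ᵢ λᵢ = n`. -/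

section YoungDiagramHooks

variable {n : ℕ} (l : n.Partition)

lemma conjPart_antitone : Antitone (conjPart l) := fun _ _ hj => by
  simp only [conjPart, Multiset.countP_eq_card_filter]
  exact Multiset.card_le_card (Multiset.monotone_filter_right _ fun _ hp => hj.trans hp)

lemma rowLen_antitone : Antitone (rowLen l) := fun _ _ hi =>
  card_le_card (monotone_filter_right _ fun _ _ hj => hi.trans hj)

lemma conjPart_le (j : ℕ) : conjPart l j ≤ n :=
  calc conjPart l j ≤ Multiset.card l.parts := Multiset.countP_le_card _ _
    _ ≤ l.parts.sum := by
      simpa using Multiset.card_nsmul_le_sum (a := 1) fun _ hx => l.parts_pos hx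
    _ = n := l.parts_sum

lemma card_Icc_filter_le {N a : ℕ} (ha : a ≤ N) : #{x ∈ Icc 1 N | x ≤ a} = a := by
  rw [show {x ∈ Icc 1 N | x ≤ a} = Icc 1 a by ext; simp only [mem_filter, mem_Icc]; omega]
  simp

lemma le_rowLen_iff_le_conjPart (i : ℕ) {j : ℕ} (hj : j ∈ Icc 1 n) :
    j ≤ rowLen l i ↔ i ≤ conjPart l j := by
  rw [mem_Icc] at hj
  constructor
  · intro hle
    by_contra! hlt
    have hsub : {j' ∈ Icc 1 n | i ≤ conjPart l j'} ⊆ Icc 1 (j - 1) := by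
      intro x hx
      simp only [mem_filter, mem_Icc] at hx ⊢
      have : ¬ j ≤ x := fun hjx => (conjPart_antitone l hjx).not_gt (hlt.trans_le hx.2)
      omega
    have := card_le_card hsub
    simp only [Nat.card_Icc] at this
    unfold rowLen at hle
    omega
  · intro hle
    have hsub : Icc 1 j ⊆ {j' ∈ Icc 1 n | i ≤ conjPart l j'} := fun x hx => by
      simp only [mem_filter, mem_Icc] at hx ⊢
      exact ⟨⟨hx.1, hx.2.trans hj.2⟩, hle.trans (conjPart_antitone l hx.2)⟩
    simpa [rowLen] using card_le_card hsub

lemma sum_Icc_countP_le_eq_sum {N : ℕ} (m : Multiset ℕ) (hm : ∀ p ∈ m, p ≤ N) :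
    ∑ j ∈ Icc 1 N, m.countP (fun p => j ≤ p) = m.sum := by
  induction m using Multiset.induction with
  | empty => simp
  | cons a m ih =>
    have ha : a ≤ N := hm a (Multiset.mem_cons_self a m)
    simp only [Multiset.countP_cons, Multiset.sum_cons, sum_add_distrib, sum_boole,
      Nat.cast_id, card_Icc_filter_le ha]
    rw [ih fun p hp => hm p (Multiset.mem_cons_of_mem hp), add_comm]

lemma sum_rowLen : ∑ i ∈ Icc 1 n, rowLen l i = n := by
  calc ∑ i ∈ Icc 1 n, rowLen l i = ∑ j ∈ Icc 1 n, #{i ∈ Icc 1 n | i ≤ conjPart l j} := by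
        simp only [rowLen, card_filter]
        exact sum_comm
    _ = ∑ j ∈ Icc 1 n, conjPart l j := sum_congr rfl fun j _ => card_Icc_filter_le (conjPart_le l j)
    _ = l.parts.sum := sum_Icc_countP_le_eq_sum _ fun _ => Nat.Partition.le_of_mem_parts
    _ = n := l.parts_sum

lemma fst_mem_Icc_of_mem_cells {s : ℕ × ℕ} (hs : s ∈ cells l) : s.1 ∈ Icc 1 n :=
  (mem_product.1 (mem_filter.1 hs).1).1

lemma snd_le_rowLen_of_mem_cells {s : ℕ × ℕ} (hs : s ∈ cells l) : s.2 ≤ rowLen l s.1 :=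
  (mem_filter.1 hs).2

lemma hookLen_add_add {s : ℕ × ℕ} (hs : s ∈ cells l) :
    hookLen l s + s.1 + s.2 = rowLen l s.1 + conjPart l s.2 + 1 := by
  have hrow := snd_le_rowLen_of_mem_cells l hs
  have hcol : s.1 ≤ conjPart l s.2 :=
    (le_rowLen_iff_le_conjPart l s.1 (mem_product.1 (mem_filter.1 hs).1).2).1 hrow
  simp only [hookLen, arm, leg]
  omega

lemma eq_of_hookLen_eq_of_le {s t : ℕ × ℕ} (hs : s ∈ cells l) (ht : t ∈ cells l)
    (hst : hookLen l s = hookLen l t) (h1 : s.1 ≤ t.1) (h2 : s.2 ≤ t.2) : s = t := by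
  have := hookLen_add_add l hs
  have := hookLen_add_add l ht
  have := rowLen_antitone l h1
  have := conjPart_antitone l h2
  exact Prod.ext (by omega) (by omega)

lemma injOn_fst_of_hookLen_eq (h : ℕ) :
    Set.InjOn Prod.fst (({s ∈ cells l | hookLen l s = h} : Finset _) : Set (ℕ × ℕ)) := by
  intro s hs t ht hst
  simp only [coe_filter, Set.mem_ofPred_eq] at hs ht
  rcases le_total s.2 t.2 with h2 | h2
  · exact eq_of_hookLen_eq_of_le l hs.1 ht.1 (hs.2.trans ht.2.symm) hst.le h2
  · exact (eq_of_hookLen_eq_of_le l ht.1 hs.1 (ht.2.trans hs.2.symm) hst.ge h2).symm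

lemma injOn_snd_of_hookLen_eq (h : ℕ) :
    Set.InjOn Prod.snd (({s ∈ cells l | hookLen l s = h} : Finset _) : Set (ℕ × ℕ)) := by
  intro s hs t ht hst
  simp only [coe_filter, Set.mem_ofPred_eq] at hs ht
  rcases le_total s.1 t.1 with h1 | h1
  · exact eq_of_hookLen_eq_of_le l hs.1 ht.1 (hs.2.trans ht.2.symm) h1 hst.le
  · exact (eq_of_hookLen_eq_of_le l ht.1 hs.1 (ht.2.trans hs.2.symm) h1 hst.ge).symm

end YoungDiagramHooks

lemma card_mul_card_add_one_le_two_mul_sum {s : Finset ℕ} (hs : 0 ∉ s) :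
    #s * (#s + 1) ≤ 2 * ∑ i ∈ s, i := by
  induction s using Finset.induction_on_max with
  | empty => simp
  | insert a t hlt ih =>
    have ht : t ⊆ Icc 1 (a - 1) := fun x hx => by
      have := hlt x hx
      have : x ≠ 0 := fun h0 => hs (mem_insert_of_mem (h0 ▸ hx))
      simp only [mem_Icc]
      omega
    have hcard := card_le_card ht
    have ha : a ∉ t := fun ha => lt_irrefl a (hlt a ha)
    have ha0 : a ≠ 0 := fun h0 => hs (h0 ▸ mem_insert_self a t)
    simp only [Nat.card_Icc] at hcard
    have hsucc : #t + 1 ≤ a := by omega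
    rw [card_insert_of_notMem ha, sum_insert ha]
    have := ih fun h0 => hs (mem_insert_of_mem h0)
    nlinarith

lemma card_filter_hookLen_eq_mul_succ_le_two_mul {n : ℕ} (l : n.Partition) (h : ℕ) :
    #{s ∈ cells l | hookLen l s = h} * (#{s ∈ cells l | hookLen l s = h} + 1) ≤ 2 * n := by
  set T := {s ∈ cells l | hookLen l s = h}
  have hcols : #T * (#T + 1) ≤ 2 * ∑ s ∈ T, s.2 := by
    have hpos : 0 ∉ T.image Prod.snd := by
      simp only [T, mem_image, mem_filter, cells, mem_product, mem_Icc]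
      omega
    have := card_mul_card_add_one_le_two_mul_sum hpos
    rwa [card_image_of_injOn (injOn_snd_of_hookLen_eq l h),
      sum_image (injOn_snd_of_hookLen_eq l h)] at this
  have hrows : ∑ s ∈ T, s.2 ≤ n :=
    calc ∑ s ∈ T, s.2 ≤ ∑ s ∈ T, rowLen l s.1 :=
          sum_le_sum fun s hs => snd_le_rowLen_of_mem_cells l (mem_filter.1 hs).1
      _ = ∑ i ∈ T.image Prod.fst, rowLen l i := (sum_image (injOn_fst_of_hookLen_eq l h)).symm
      _ ≤ ∑ i ∈ Icc 1 n, rowLen l i := sum_le_sum_of_subset <| image_subset_iff.2 fun s hs =>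
          fst_mem_Icc_of_mem_cells l (mem_filter.1 hs).1
      _ = n := sum_rowLen l
  omega

theorem stmt7_general (n : ℕ) (l : n.Partition) (h : ℕ) :
    (((cells l).filter (fun s => hookLen l s = h)).card : ℝ) ≤ Real.sqrt (2 * n) := by
  have := card_filter_hookLen_eq_mul_succ_le_two_mul l h
  rw [Real.le_sqrt (by positivity) (by positivity)]
  exact_mod_cast (by nlinarith : #{s ∈ cells l | hookLen l s = h} ^ 2 ≤ 2 * n)

theorem stmt7 (n : ℕ) (l : n.Partition) (h : ℕ) (hh : 1 ≤ h) :
    (((cells l).filter (fun s => hookLen l s = h)).card : ℝ) ≤ Real.sqrt (2 * n) :=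
  stmt7_general n l h
end

section
/- For real q ≥ 2 and integer n ≥ 1, z(n,q) satisfies the recurrence z(n,q) = (1/(q^n - 1)) ∑_{i=1}^n z(n-i,q) / (1/q)_i, where z(0,q) = 1 and (1/q)_i = ∏_{k=1}^i (1 - 1/q^k), and z(n,q) denotes the coefficient of u^n in ∏_{i≥1} ∏_{j≥0} 1/(1 - u/q^{i+j}). -/
open Finset

/-!
Put `x = 1/q`, `Z(u) = ∏_{i ≥ 1, j ≥ 0} (1 - u x^{i+j})⁻¹` and `E(u) = ∏_{j ≥ 0} (1 - u x^j)⁻¹`.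
Splitting off the factors with `i = 1` gives `Z(u) = E(ux) Z(ux)`, i.e.
`z_n = x^n ∑_{k ≤ n} e_k z_{n-k}`. Splitting off the factor `j = 0` of `E` gives
`E(u) = E(ux) / (1 - u)`, whence Euler's `e_k = 1 / (1/q)_k`.
So `q^n z_n = ∑_{k ≤ n} z_{n-k} / (1/q)_k`, and the term `k = 0` is `z_n` itself.

Coefficients of such products are sums of monomials over finitely supported exponent vectors.
They are computed in `ℝ≥0∞`, where every rearrangement is free; `x < 1` is needed only to
cancel and to pass back to `ℝ`.
-/

open ENNReal

noncomputable section

variable {α β γ : Type*}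

lemma Finsupp.degree_sumElim (g : β →₀ ℕ) (h : γ →₀ ℕ) :
    (g.sumElim h).degree = g.degree + h.degree := by
  rw [Finsupp.sumElim_eq_add, map_add, Finsupp.degree_mapDomain, Finsupp.degree_mapDomain]

/-- The coefficient of `u ^ n` in `∏ a, (1 - u * w a)⁻¹`, i.e. the complete homogeneous
symmetric function `h_n` evaluated at the family `w`. -/
def completeHomogeneous (w : α → ℝ≥0∞) (n : ℕ) : ℝ≥0∞ :=
  ∑' f : {f : α →₀ ℕ // f.degree = n}, f.1.prod fun a k => w a ^ k

lemma completeHomogeneous_eq_tsum_ite (w : α → ℝ≥0∞) (n : ℕ) :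
    completeHomogeneous w n =
      ∑' f : α →₀ ℕ, if f.degree = n then f.prod (fun a k => w a ^ k) else 0 :=
  (tsum_subtype {f : α →₀ ℕ | f.degree = n} fun f => f.prod fun a k => w a ^ k).trans
    (tsum_congr fun f => by simp only [Set.indicator_apply, Set.mem_ofPred_eq])

lemma completeHomogeneous_zero (w : α → ℝ≥0∞) : completeHomogeneous w 0 = 1 := by
  rw [completeHomogeneous, tsum_eq_single ⟨0, map_zero _⟩]
  · simp
  · rintro ⟨f, hf⟩ hne
    exact absurd (Subtype.ext ((Finsupp.degree_eq_zero_iff f).1 hf)) hne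

lemma completeHomogeneous_of_unique [Unique α] (w : α → ℝ≥0∞) (n : ℕ) :
    completeHomogeneous w n = w default ^ n := by
  have hdeg : ∀ f : α →₀ ℕ, f.degree = f default := fun f => by
    rw [Finsupp.degree_apply, Finset.sum_subset (Finset.subset_univ _) (by simp)]
    exact Fintype.sum_unique _
  rw [completeHomogeneous, tsum_eq_single ⟨Finsupp.single default n, Finsupp.degree_single _ _⟩]
  · exact Finsupp.prod_single_index (pow_zero _)
  · rintro ⟨f, hf⟩ hne
    refine absurd (Subtype.ext ?_) hne
    dsimp only
    rw [Finsupp.unique_single f, ← hdeg f, hf]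

lemma completeHomogeneous_comp_equiv (e : α ≃ β) (w : β → ℝ≥0∞) (n : ℕ) :
    completeHomogeneous (w ∘ e) n = completeHomogeneous w n := by
  let e' : {f : α →₀ ℕ // f.degree = n} ≃ {f : β →₀ ℕ // f.degree = n} :=
    (Finsupp.equivCongrLeft e).subtypeEquiv fun f => by
      simp [Finsupp.equivCongrLeft_apply, Finsupp.equivMapDomain_eq_mapDomain]
  rw [completeHomogeneous, completeHomogeneous, ← e'.tsum_eq]
  exact tsum_congr fun f => (Finsupp.prod_equivMapDomain e f.1 fun b k => w b ^ k).symm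

lemma completeHomogeneous_const_mul (c : ℝ≥0∞) (w : α → ℝ≥0∞) (n : ℕ) :
    completeHomogeneous (fun a => c * w a) n = c ^ n * completeHomogeneous w n := by
  rw [completeHomogeneous, completeHomogeneous, ← ENNReal.tsum_mul_left]
  refine tsum_congr fun f => ?_
  simp_rw [mul_pow]
  rw [Finsupp.prod_mul, Finsupp.prod, Finsupp.prod, Finset.prod_pow_eq_pow_sum,
    ← Finsupp.degree_apply, f.2]

theorem completeHomogeneous_sumElim (w : β → ℝ≥0∞) (v : γ → ℝ≥0∞) (n : ℕ) :
    completeHomogeneous (Sum.elim w v) n =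
      ∑ p ∈ antidiagonal n, completeHomogeneous w p.1 * completeHomogeneous v p.2 := by
  classical
  have split_ite : ∀ (g : β →₀ ℕ) (h : γ →₀ ℕ),
      (if (g.sumElim h).degree = n then (g.sumElim h).prod (fun a k => Sum.elim w v a ^ k) else 0)
        = ∑ p ∈ antidiagonal n,
          (if g.degree = p.1 then g.prod (fun b k => w b ^ k) else 0) *
            (if h.degree = p.2 then h.prod (fun c k => v c ^ k) else 0) := by
    intro g h
    have hp (p : ℕ × ℕ) : (g.degree = p.1 ∧ h.degree = p.2) ↔ (g.degree, h.degree) = p := by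
      rw [Prod.ext_iff]
    simp only [ite_zero_mul_ite_zero, hp, Finset.sum_ite_eq,
      Finset.HasAntidiagonal.mem_antidiagonal, Finsupp.degree_sumElim, Finsupp.prod_sumElim]
    rfl
  calc completeHomogeneous (Sum.elim w v) n
      = ∑' (g : β →₀ ℕ) (h : γ →₀ ℕ), if (g.sumElim h).degree = n then
          (g.sumElim h).prod (fun a k => Sum.elim w v a ^ k) else 0 := by
        rw [completeHomogeneous_eq_tsum_ite, ← Finsupp.sumFinsuppEquivProdFinsupp.symm.tsum_eq,
          ENNReal.tsum_prod']
        rfl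
    _ = _ := by
        simp_rw [split_ite, completeHomogeneous_eq_tsum_ite, ← ENNReal.tsum_mul_right,
          ← ENNReal.tsum_mul_left]
        rw [← Summable.tsum_finsetSum fun _ _ => ENNReal.summable]
        exact tsum_congr fun g => Summable.tsum_finsetSum fun _ _ => ENNReal.summable

lemma completeHomogeneous_succ_le (w : α → ℝ≥0∞) (n : ℕ) :
    completeHomogeneous w (n + 1) ≤ completeHomogeneous w n * ∑' a, w a := by
  classical
  let addOne (p : {f : α →₀ ℕ // f.degree = n} × α) : {f : α →₀ ℕ // f.degree = n + 1} :=
    ⟨p.1.1 + Finsupp.single p.2 1, by rw [map_add, p.1.2, Finsupp.degree_single]⟩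
  have hsurj : Function.Surjective addOne := by
    rintro ⟨f, hf⟩
    obtain ⟨a, ha⟩ : f.support.Nonempty :=
      Finsupp.support_nonempty_iff.2 (by rintro rfl; simp at hf)
    have hle : Finsupp.single a 1 ≤ f :=
      Finsupp.single_le_iff.2 (Nat.one_le_iff_ne_zero.2 (Finsupp.mem_support_iff.1 ha))
    have hdeg := congrArg Finsupp.degree (tsub_add_cancel_of_le hle)
    rw [map_add, Finsupp.degree_single, hf] at hdeg
    exact ⟨(⟨f - Finsupp.single a 1, by omega⟩, a), Subtype.ext (tsub_add_cancel_of_le hle)⟩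
  calc completeHomogeneous w (n + 1)
      ≤ ∑' p, (addOne p).1.prod (fun a k => w a ^ k) :=
        ENNReal.tsum_le_tsum_comp_of_surjective hsurj _
    _ = ∑' (g : {f : α →₀ ℕ // f.degree = n}) (a : α),
          g.1.prod (fun b k => w b ^ k) * w a := by
        rw [ENNReal.tsum_prod']
        refine tsum_congr fun g => tsum_congr fun a => ?_
        rw [Finsupp.prod_add_index' (fun _ => pow_zero _) (fun _ _ _ => pow_add _ _ _),
          Finsupp.prod_single_index (h := fun b k => w b ^ k) (pow_zero _), pow_one]
    _ = completeHomogeneous w n * ∑' a, w a := by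
        simp_rw [ENNReal.tsum_mul_left, ENNReal.tsum_mul_right]
        rfl

lemma completeHomogeneous_le_pow (w : α → ℝ≥0∞) (n : ℕ) :
    completeHomogeneous w n ≤ (∑' a, w a) ^ n := by
  induction n with
  | zero => rw [completeHomogeneous_zero, pow_zero]
  | succ n ih =>
    rw [pow_succ]
    exact (completeHomogeneous_succ_le w n).trans (mul_le_mul_left ih _)

lemma completeHomogeneous_ne_top {w : α → ℝ≥0∞} (hw : ∑' a, w a ≠ ⊤) (n : ℕ) :
    completeHomogeneous w n ≠ ⊤ :=
  ne_top_of_le_ne_top (pow_ne_top hw) (completeHomogeneous_le_pow w n)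

def firstColumnSplit : ℕ × ℕ ≃ ℕ ⊕ ℕ × ℕ where
  toFun
    | (0, j) => .inl j
    | (i + 1, j) => .inr (i, j)
  invFun := Sum.elim (fun j => (0, j)) (fun p => (p.1 + 1, p.2))
  left_inv := by rintro ⟨_ | i, j⟩ <;> rfl
  right_inv := by rintro (j | ⟨i, j⟩) <;> rfl

section Geometric

variable (x : ℝ≥0∞)

/- The coefficients `e_m` and `z_n` of the header, with `x` in place of `1/q`. -/
def eulerCoeff (m : ℕ) : ℝ≥0∞ := completeHomogeneous (fun j : ℕ => x ^ j) m

def doubleProductCoeff (n : ℕ) : ℝ≥0∞ :=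
  completeHomogeneous (fun p : ℕ × ℕ => x ^ (p.1 + 1 + p.2)) n

lemma eulerCoeff_eq_sum (m : ℕ) :
    eulerCoeff x m = ∑ k ∈ range (m + 1), x ^ k * eulerCoeff x k := by
  have hw : (fun j : ℕ => x ^ j) =
      Sum.elim (fun j => x * x ^ j) (fun _ : PUnit.{1} => 1) ∘ Equiv.natEquivNatSumPUnit := by
    funext j
    cases j <;> simp [Equiv.natEquivNatSumPUnit, pow_succ']
  rw [eulerCoeff, hw, completeHomogeneous_comp_equiv, completeHomogeneous_sumElim,
    Finset.Nat.sum_antidiagonal_eq_sum_range_succ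
      (fun a b => completeHomogeneous (fun j => x * x ^ j) a *
        completeHomogeneous (fun _ : PUnit.{1} => (1 : ℝ≥0∞)) b)]
  simp_rw [completeHomogeneous_const_mul, completeHomogeneous_of_unique, one_pow, mul_one]
  rfl

lemma eulerCoeff_succ (m : ℕ) :
    eulerCoeff x (m + 1) = eulerCoeff x m + x ^ (m + 1) * eulerCoeff x (m + 1) := by
  conv_lhs => rw [eulerCoeff_eq_sum x (m + 1), Finset.sum_range_succ, ← eulerCoeff_eq_sum x m]

lemma doubleProductCoeff_eq (n : ℕ) :
    doubleProductCoeff x n =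
      x ^ n * ∑ k ∈ range (n + 1), eulerCoeff x k * doubleProductCoeff x (n - k) := by
  have hw : (fun p : ℕ × ℕ => x ^ (p.1 + 1 + p.2)) =
      Sum.elim (fun j => x * x ^ j) (fun p : ℕ × ℕ => x * x ^ (p.1 + 1 + p.2)) ∘
        firstColumnSplit := by
    funext ⟨i, j⟩
    cases i <;> simp only [firstColumnSplit, Equiv.coe_fn_mk, Function.comp_apply,
      Sum.elim_inl, Sum.elim_inr] <;> ring
  rw [doubleProductCoeff, hw, completeHomogeneous_comp_equiv, completeHomogeneous_sumElim,
    Finset.Nat.sum_antidiagonal_eq_sum_range_succ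
      (fun a b => completeHomogeneous (fun j => x * x ^ j) a *
        completeHomogeneous (fun p : ℕ × ℕ => x * x ^ (p.1 + 1 + p.2)) b), Finset.mul_sum]
  refine Finset.sum_congr rfl fun k hk => ?_
  rw [completeHomogeneous_const_mul, completeHomogeneous_const_mul, ← eulerCoeff,
    ← doubleProductCoeff, ← pow_mul_pow_sub x (Nat.lt_succ_iff.1 (Finset.mem_range.1 hk))]
  ring

variable {x}

lemma tsum_geometric_ne_top (hx : x < 1) : ∑' j : ℕ, x ^ j ≠ ⊤ := by
  rw [ENNReal.tsum_geometric, ENNReal.inv_ne_top]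
  exact (tsub_pos_of_lt hx).ne'

lemma eulerCoeff_ne_top (hx : x < 1) (m : ℕ) : eulerCoeff x m ≠ ⊤ :=
  completeHomogeneous_ne_top (tsum_geometric_ne_top hx) m

lemma doubleProductCoeff_ne_top (hx : x < 1) (n : ℕ) : doubleProductCoeff x n ≠ ⊤ := by
  refine completeHomogeneous_ne_top ?_ n
  simp_rw [ENNReal.tsum_prod', pow_add, pow_one, ENNReal.tsum_mul_left, ENNReal.tsum_mul_right]
  exact mul_ne_top (mul_ne_top (tsum_geometric_ne_top hx) (hx.trans one_lt_top).ne)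
    (tsum_geometric_ne_top hx)

lemma eulerCoeff_mul_prod (hx : x < 1) (m : ℕ) :
    eulerCoeff x m * ∏ k ∈ Icc 1 m, (1 - x ^ k) = 1 := by
  induction m with
  | zero => simp [eulerCoeff, completeHomogeneous_zero]
  | succ m ih =>
    have hfin : x ^ (m + 1) * eulerCoeff x (m + 1) ≠ ⊤ :=
      mul_ne_top (pow_ne_top (hx.trans one_lt_top).ne) (eulerCoeff_ne_top hx _)
    have hstep : eulerCoeff x (m + 1) * (1 - x ^ (m + 1)) = eulerCoeff x m := by
      rw [ENNReal.mul_sub fun _ _ => eulerCoeff_ne_top hx _, mul_one, mul_comm]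
      exact ENNReal.sub_eq_of_eq_add hfin (eulerCoeff_succ x m)
    rw [Finset.prod_Icc_succ_top (by omega), mul_comm (∏ k ∈ Icc 1 m, _), ← mul_assoc, hstep,
      ih]

end Geometric

section Real

variable {q : ℝ}

lemma zCoeff_eq_toReal (hq : 0 ≤ q) (n : ℕ) :
    zCoeff n q = (doubleProductCoeff (ENNReal.ofReal q⁻¹) n).toReal := by
  rw [doubleProductCoeff, completeHomogeneous, ENNReal.tsum_toReal_eq]
  · refine tsum_congr fun f => ?_
    rw [Finsupp.prod, ENNReal.toReal_prod]
    refine Finset.prod_congr rfl fun p _ => ?_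
    rw [ENNReal.toReal_pow, ENNReal.toReal_pow, ENNReal.toReal_ofReal (inv_nonneg.2 hq)]
    simp only [one_div, inv_pow]
  · exact fun f => ENNReal.prod_ne_top fun p _ => pow_ne_top (pow_ne_top ofReal_ne_top)

lemma ENNReal.ofReal_inv_lt_one (hq : 1 < q) : ENNReal.ofReal q⁻¹ < 1 :=
  ENNReal.ofReal_lt_one.2 (inv_lt_one_of_one_lt₀ hq)

lemma eulerCoeff_toReal (hq : 1 < q) (m : ℕ) :
    (eulerCoeff (ENNReal.ofReal q⁻¹) m).toReal = (qPoch q m)⁻¹ := by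
  have hx := ofReal_inv_lt_one hq
  have h := congrArg ENNReal.toReal (eulerCoeff_mul_prod hx m)
  rw [ENNReal.toReal_mul, ENNReal.toReal_prod, ENNReal.toReal_one] at h
  refine eq_inv_of_mul_eq_one_left (Eq.trans ?_ h)
  rw [qPoch]
  congr 1
  refine Finset.prod_congr rfl fun k _ => ?_
  rw [ENNReal.toReal_sub_of_le (pow_le_one₀ zero_le hx.le) one_ne_top, ENNReal.toReal_one,
    ENNReal.toReal_pow, ENNReal.toReal_ofReal (inv_nonneg.2 (zero_le_one.trans hq.le)), one_div,
    inv_pow]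

lemma pow_mul_zCoeff (hq : 1 < q) (n : ℕ) :
    q ^ n * zCoeff n q = ∑ k ∈ range (n + 1), zCoeff (n - k) q / qPoch q k := by
  have hq0 : 0 < q := zero_lt_one.trans hq
  have hx := ofReal_inv_lt_one hq
  have h := congrArg ENNReal.toReal (doubleProductCoeff_eq (ENNReal.ofReal q⁻¹) n)
  rw [ENNReal.toReal_mul, ENNReal.toReal_pow, ENNReal.toReal_ofReal (inv_nonneg.2 hq0.le),
    ENNReal.toReal_sum fun k _ =>
      mul_ne_top (eulerCoeff_ne_top hx k) (doubleProductCoeff_ne_top hx _)] at h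
  simp_rw [ENNReal.toReal_mul, eulerCoeff_toReal hq, ← zCoeff_eq_toReal hq0.le] at h
  rw [h, ← mul_assoc, ← mul_pow, mul_inv_cancel₀ hq0.ne', one_pow, one_mul]
  exact Finset.sum_congr rfl fun k _ => inv_mul_eq_div _ _

end Real

end

theorem stmt10 (q : ℝ) (hq : 2 ≤ q) (n : ℕ) (hn : 1 ≤ n) :
    zCoeff n q = (1 / (q^n - 1)) * ∑ i ∈ Finset.Icc 1 n, zCoeff (n - i) q / qPoch q i := by
  have hq1 : 1 < q := by linarith
  have hqn : 1 < q ^ n := one_lt_pow₀ hq1 (by omega)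
  have hrec := pow_mul_zCoeff hq1 n
  rw [range_eq_Ico, Finset.sum_eq_sum_Ico_succ_bot n.succ_pos] at hrec
  simp only [zero_add, Nat.succ_eq_add_one, Finset.Ico_add_one_right_eq_Icc, Nat.sub_zero] at hrec
  rw [show qPoch q 0 = 1 by simp [qPoch], div_one] at hrec
  rw [one_div, inv_mul_eq_div, eq_div_iff (sub_ne_zero.2 hqn.ne')]
  linarith
end

section
/- For q > 1 and n ≥ 0, the sum over all partitions λ of n of 1/(∏_j q^{(λ'_j)^2} (1/q)_{m_j(λ)}) equals 1/(q^n (1/q)_n), where λ' is the conjugate partition, m_j(λ) is the number of parts of λ equal to j, and (1/q)_m = ∏_{k=1}^m (1 - 1/q^k). -/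
open Finset

/-!
Removing the first column of `λ` (its height is the number `ℓ(λ)` of parts) leaves a partition
`ν` with at most `ℓ(λ)` parts, and `Pden λ = q^{ℓ(λ)²} (1/q)_{ℓ(λ) - ℓ(ν)} Pden ν`. Hence the sums
`PdenSum q m k = ∑_{λ ⊢ m} (1/q)_k / ((1/q)_{k - ℓ(λ)} Pden λ)` satisfy a recursion over the
height of the first column, which the `q`-Vandermonde identity solves:
`PdenSum q m k = q^{-m} [m + k - 1, m]`, Gaussian binomials being taken in base `1/q`.
The same decomposition turns the sum of the theorem into
`q^{-n} ∑_s q^{-s(s+1)} [n - 1, s] / (1/q)_{s+1}`, and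
`∑_s q^{-s(s+a)} [N, s] / (1/q)_{s+a} = 1 / (1/q)_{N+a}` for every shift `a`, since the
`q`-Pascal rule turns the sum for `(N + 1, a)` into the sum for `(N, a + 1)`.
-/

def gaussBinom {R : Type*} [CommSemiring R] (t : R) : ℕ → ℕ → R
  | _, 0 => 1
  | 0, _ + 1 => 0
  | n + 1, k + 1 => gaussBinom t n k + t ^ (k + 1) * gaussBinom t n (k + 1)

section GaussBinom

variable {R : Type*} [CommSemiring R] (t : R)

@[simp]
theorem gaussBinom_zero_right (n : ℕ) : gaussBinom t n 0 = 1 := by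
  cases n <;> rfl

@[simp]
theorem gaussBinom_zero_succ (k : ℕ) : gaussBinom t 0 (k + 1) = 0 := rfl

theorem gaussBinom_succ_succ (n k : ℕ) :
    gaussBinom t (n + 1) (k + 1) = gaussBinom t n k + t ^ (k + 1) * gaussBinom t n (k + 1) :=
  rfl

theorem gaussBinom_eq_zero_of_lt {n k : ℕ} (h : n < k) : gaussBinom t n k = 0 := by
  induction n generalizing k with
  | zero => obtain ⟨k, rfl⟩ := Nat.exists_eq_add_one_of_ne_zero h.ne'; rfl
  | succ n ih =>
    obtain ⟨k, rfl⟩ := Nat.exists_eq_add_one_of_ne_zero (by omega : k ≠ 0)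
    rw [gaussBinom_succ_succ, ih (by omega), ih (by omega), mul_zero, add_zero]

@[simp]
theorem gaussBinom_self (n : ℕ) : gaussBinom t n n = 1 := by
  induction n with
  | zero => rfl
  | succ n ih =>
    rw [gaussBinom_succ_succ, ih, gaussBinom_eq_zero_of_lt t n.lt_succ_self, mul_zero, add_zero]

theorem sum_range_mul_gaussBinom_succ (g : ℕ → R) (N : ℕ) :
    ∑ s ∈ range (N + 2), g s * gaussBinom t (N + 1) s =
      ∑ s ∈ range (N + 1), (g (s + 1) + t ^ s * g s) * gaussBinom t N s := by
  have hshift : ∑ s ∈ range (N + 1), t ^ s * g s * gaussBinom t N s =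
      ∑ s ∈ range (N + 1), g (s + 1) * (t ^ (s + 1) * gaussBinom t N (s + 1)) + g 0 := by
    rw [sum_range_succ', sum_range_succ _ N, gaussBinom_eq_zero_of_lt t N.lt_succ_self]
    simp only [mul_zero, add_zero, pow_zero, one_mul, gaussBinom_zero_right, mul_one]
    exact congrArg (· + g 0) (sum_congr rfl fun _ _ => by ring)
  rw [sum_range_succ']
  simp only [gaussBinom_succ_succ, mul_add, add_mul, sum_add_distrib, hshift,
    gaussBinom_zero_right, mul_one]
  ring

theorem gaussBinom_add (a b c : ℕ) :
    gaussBinom t (a + b) c =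
      ∑ p ∈ antidiagonal c,
        t ^ ((a - p.1) * p.2) * gaussBinom t a p.1 * gaussBinom t b p.2 := by
  induction a generalizing c with
  | zero => cases c <;> simp [Finset.Nat.sum_antidiagonal_succ]
  | succ a ih =>
    cases c with
    | zero => simp
    | succ r =>
      have hterm : ∀ p ∈ antidiagonal r,
          t ^ (r + 1) * (t ^ ((a - (p.1 + 1)) * p.2) * gaussBinom t a (p.1 + 1) *
            gaussBinom t b p.2) =
          t ^ ((a - p.1) * p.2) * (t ^ (p.1 + 1) * gaussBinom t a (p.1 + 1)) *
            gaussBinom t b p.2 := by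
        rintro ⟨i, j⟩ hij
        rw [Finset.HasAntidiagonal.mem_antidiagonal] at hij
        subst hij
        rcases lt_or_ge a (i + 1) with h | h
        · simp [gaussBinom_eq_zero_of_lt t h]
        · obtain ⟨d, rfl⟩ := Nat.exists_eq_add_of_le h
          simp only [Nat.add_sub_cancel_left, show i + 1 + d - i = d + 1 by omega]
          ring
      rw [add_right_comm, gaussBinom_succ_succ, ih, ih, Finset.Nat.sum_antidiagonal_succ,
        Finset.Nat.sum_antidiagonal_succ, mul_add, mul_sum]
      simp only [gaussBinom_succ_succ, gaussBinom_zero_right, mul_add, add_mul, sum_add_distrib,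
        Nat.add_sub_add_right, mul_one]
      rw [sum_congr rfl hterm, Nat.sub_zero, Nat.sub_zero]
      ring

end GaussBinom

section QPoch

variable {q : ℝ}

@[simp]
theorem qPoch_zero : qPoch q 0 = 1 := by simp [qPoch]

theorem qPoch_succ (m : ℕ) : qPoch q (m + 1) = qPoch q m * (1 - q⁻¹ ^ (m + 1)) := by
  rw [qPoch, qPoch, prod_Icc_succ_top (by omega), one_div, inv_pow]

theorem one_sub_inv_pow_pos (hq : 1 < q) {k : ℕ} (hk : k ≠ 0) : 0 < 1 - q⁻¹ ^ k :=
  sub_pos.2 (pow_lt_one₀ (by positivity) (inv_lt_one_of_one_lt₀ hq) hk)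

theorem qPoch_pos (hq : 1 < q) (m : ℕ) : 0 < qPoch q m := by
  refine prod_pos fun k hk => ?_
  rw [one_div, ← inv_pow]
  exact one_sub_inv_pow_pos hq (by simp at hk; omega)

theorem gaussBinom_mul_qPoch_mul_qPoch {n k : ℕ} (h : k ≤ n) :
    gaussBinom q⁻¹ n k * qPoch q k * qPoch q (n - k) = qPoch q n := by
  induction n generalizing k with
  | zero =>
    obtain rfl : k = 0 := by omega
    simp
  | succ n ih =>
    rcases k with _ | k
    · simp
    rcases Nat.lt_or_eq_of_le (Nat.le_of_succ_le_succ h) with hk | rfl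
    · obtain ⟨d, rfl⟩ := Nat.exists_eq_add_of_lt hk
      have h1 := ih (k := k) (by omega)
      have h2 := ih (k := k + 1) (by omega)
      rw [show k + d + 1 - k = d + 1 by omega, qPoch_succ d] at h1
      rw [show k + d + 1 - (k + 1) = d by omega, qPoch_succ k] at h2
      rw [show k + d + 1 + 1 - (k + 1) = d + 1 by omega, gaussBinom_succ_succ,
        qPoch_succ (k + d + 1), qPoch_succ d, qPoch_succ k]
      linear_combination
        (1 - q⁻¹ ^ (k + 1)) * h1 + q⁻¹ ^ (k + 1) * (1 - q⁻¹ ^ (d + 1)) * h2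
    · simp

theorem gaussBinom_symm (hq : 1 < q) {n k : ℕ} (h : k ≤ n) :
    gaussBinom q⁻¹ n (n - k) = gaussBinom q⁻¹ n k := by
  have h1 := gaussBinom_mul_qPoch_mul_qPoch (q := q) h
  have h2 := gaussBinom_mul_qPoch_mul_qPoch (q := q) (Nat.sub_le n k)
  rw [Nat.sub_sub_self h] at h2
  refine mul_right_cancel₀ (mul_pos (qPoch_pos hq k) (qPoch_pos hq (n - k))).ne' ?_
  linear_combination h2 - h1

theorem sum_range_pow_div_qPoch_mul_gaussBinom (hq : 1 < q) (N a : ℕ) :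
    ∑ s ∈ range (N + 1), q⁻¹ ^ (s * (s + a)) / qPoch q (s + a) * gaussBinom q⁻¹ N s =
      1 / qPoch q (N + a) := by
  induction N generalizing a with
  | zero => simp
  | succ N ih =>
    rw [sum_range_mul_gaussBinom_succ, show N + 1 + a = N + (a + 1) by ring, ← ih (a + 1)]
    refine sum_congr rfl fun s _ => ?_
    have hs := (qPoch_pos hq (s + a)).ne'
    have hs1 := (one_sub_inv_pow_pos hq (by omega : s + a + 1 ≠ 0)).ne'
    rw [show s + 1 + a = s + a + 1 by ring, show s + (a + 1) = s + a + 1 by ring, qPoch_succ,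
      show (s + 1) * (s + a + 1) = s * (s + a + 1) + (s + a + 1) by ring, pow_add,
      show s * (s + a + 1) = s + s * (s + a) by ring, pow_add]
    generalize q⁻¹ ^ (s + a + 1) = x at hs1 ⊢
    field_simp
    ring

end QPoch

namespace Nat.Partition

open Multiset

theorem card_parts_le {n : ℕ} (l : n.Partition) : card l.parts ≤ n := by
  simpa [l.parts_sum] using card_nsmul_le_sum (s := l.parts) (a := 1) fun _ => l.parts_pos

theorem card_parts_ne_zero {n : ℕ} (hn : n ≠ 0) (l : n.Partition) : card l.parts ≠ 0 := by
  intro h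
  rw [Multiset.card_eq_zero] at h
  simpa [h, eq_comm, hn] using l.parts_sum

theorem map_add_one_map_sub_one {n : ℕ} (l : n.Partition) :
    (l.parts.map (· - 1)).map (· + 1) = l.parts := by
  rw [Multiset.map_map]
  exact (Multiset.map_congr rfl fun p hp => Nat.sub_add_cancel (l.parts_pos hp)).trans (map_id _)

variable {m j : ℕ}

def addColumn (ν : m.Partition) (hν : card ν.parts ≤ j) : (m + j).Partition where
  parts := (ν.parts + replicate (j - card ν.parts) 0).map (· + 1)
  parts_pos hi := by
    obtain ⟨a, -, rfl⟩ := Multiset.mem_map.1 hi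
    exact a.succ_pos
  parts_sum := by
    simp [sum_map_add, ν.parts_sum]
    omega

/-- `ofSums` discards the parts equal to `1` in `l`, which become `0`. -/
def removeColumn (l : (m + j).Partition) (hl : card l.parts = j) : m.Partition :=
  ofSums m (l.parts.map (· - 1)) (by
    have := congrArg sum l.map_add_one_map_sub_one
    simp [sum_map_add, l.parts_sum, hl] at this
    omega)

theorem card_addColumn (ν : m.Partition) (hν : card ν.parts ≤ j) :
    card (addColumn ν hν).parts = j := by
  simp [addColumn]
  omega

theorem card_removeColumn_le (l : (m + j).Partition) (hl : card l.parts = j) :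
    card (removeColumn l hl).parts ≤ j :=
  (Multiset.card_le_card (filter_le _ _)).trans (by simp [hl])

theorem removeColumn_addColumn (ν : m.Partition) (hν : card ν.parts ≤ j) :
    removeColumn (addColumn ν hν) (card_addColumn ν hν) = ν := by
  ext1
  simp only [removeColumn, addColumn, ofSums_parts, Multiset.map_map, Function.comp_def,
    Nat.add_sub_cancel, map_id', filter_add, filter_eq_self.2 fun a ha => (ν.parts_pos ha).ne',
    add_eq_left, filter_eq_nil]
  exact fun a ha => by simp [eq_of_mem_replicate ha]

theorem addColumn_removeColumn (l : (m + j).Partition) (hl : card l.parts = j) :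
    addColumn (removeColumn l hl) (card_removeColumn_le l hl) = l := by
  ext1
  set s := l.parts.map (· - 1)
  have hzeros : s.filter (fun a => ¬a ≠ 0) = replicate (j - card (s.filter (· ≠ 0))) 0 := by
    have hcard := congrArg Multiset.card (filter_add_not (· ≠ 0) s)
    rw [Multiset.card_add, Multiset.card_map, hl] at hcard
    rw [← hcard, Nat.add_sub_cancel_left]
    exact eq_replicate_card.2 fun b hb => by simpa using (mem_filter.1 hb).2
  simp only [addColumn, removeColumn, ofSums_parts]
  rw [← hzeros, filter_add_not, map_add_one_map_sub_one]

end Nat.Partition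

section Pden

open Nat.Partition Multiset

variable {q : ℝ} {m j : ℕ} (ν : m.Partition) (hν : card ν.parts ≤ j)

theorem Pden_eq_prod_range {n N : ℕ} (l : n.Partition) (hN : n ≤ N) :
    Pden q l = ∏ i ∈ range N, q ^ conjPart l (i + 1) ^ 2 * qPoch q (mult l (i + 1)) := by
  rw [Pden, ← Ico_add_one_right_eq_Icc, prod_Ico_eq_prod_range, Nat.add_sub_cancel]
  simp only [add_comm 1]
  refine prod_subset (range_subset_range.2 hN) fun i _ hi => ?_
  have hlt : n < i + 1 := by simp at hi; omega
  have hconj : conjPart l (i + 1) = 0 :=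
    countP_eq_zero.2 fun p hp => by have := le_of_mem_parts hp; omega
  have hmult : mult l (i + 1) = 0 :=
    count_eq_zero.2 fun hp => by have := le_of_mem_parts hp; omega
  simp [hconj, hmult]

theorem Pden_pos (hq : 1 < q) {n : ℕ} (l : n.Partition) : 0 < Pden q l :=
  prod_pos fun _ _ => mul_pos (pow_pos (by linarith) _) (qPoch_pos hq _)

theorem conjPart_addColumn_one : conjPart (addColumn ν hν) 1 = j := by
  rw [conjPart, (countP_eq_card (p := (1 ≤ ·))).2 fun a ha => (addColumn ν hν).parts_pos ha,
    card_addColumn]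

theorem conjPart_addColumn_add_two (i : ℕ) :
    conjPart (addColumn ν hν) (i + 2) = conjPart ν (i + 1) := by
  rw [conjPart, conjPart, addColumn, countP_map, ← countP_eq_card_filter, countP_add,
    (countP_eq_zero (s := replicate _ 0)).2 fun a ha => by simp [eq_of_mem_replicate ha],
    add_zero]
  simp only [show ∀ a, i + 2 ≤ a + 1 ↔ i + 1 ≤ a from fun a => by omega]

theorem mult_addColumn_add_one (i : ℕ) :
    mult (addColumn ν hν) (i + 1) =
      count i ν.parts + count i (replicate (j - card ν.parts) 0) := by
  rw [mult, addColumn, count_map_eq_count' _ _ (add_left_injective 1), count_add]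

theorem mult_addColumn_one : mult (addColumn ν hν) 1 = j - card ν.parts := by
  rw [mult_addColumn_add_one, count_replicate_self,
    count_eq_zero.2 fun h => (ν.parts_pos h).ne' rfl, zero_add]

theorem mult_addColumn_add_two (i : ℕ) : mult (addColumn ν hν) (i + 2) = mult ν (i + 1) := by
  rw [mult_addColumn_add_one, count_replicate, if_neg (by omega), add_zero, mult]

theorem Pden_addColumn :
    Pden q (addColumn ν hν) = q ^ j ^ 2 * qPoch q (j - card ν.parts) * Pden q ν := by
  rw [Pden_eq_prod_range _ (m + j).le_succ, prod_range_succ',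
    Pden_eq_prod_range ν (m.le_add_right j)]
  simp only [conjPart_addColumn_add_two, mult_addColumn_add_two, zero_add,
    conjPart_addColumn_one, mult_addColumn_one]
  ring

theorem one_div_Pden_addColumn (hq : 1 < q) :
    1 / Pden q (addColumn ν hν) = q⁻¹ ^ j ^ 2 / qPoch q j *
      (gaussBinom q⁻¹ j (card ν.parts) * qPoch q (card ν.parts) / Pden q ν) := by
  have h := gaussBinom_mul_qPoch_mul_qPoch (q := q) hν
  have hG : gaussBinom q⁻¹ j (card ν.parts) * qPoch q (card ν.parts) ≠ 0 :=
    left_ne_zero_of_mul (h ▸ (qPoch_pos hq j).ne')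
  have := (qPoch_pos hq (j - card ν.parts)).ne'
  have := (Pden_pos hq ν).ne'
  have : q ≠ 0 := by positivity
  rw [Pden_addColumn, ← h, inv_pow]
  generalize gaussBinom q⁻¹ j _ * qPoch q _ = G at hG ⊢
  field_simp

end Pden

section PdenSum

open Nat.Partition Multiset

variable {q : ℝ}

/-- `∑_{λ ⊢ m} (1/q)_k / ((1/q)_{k - ℓ(λ)} Pden λ)`, with the weight written so that it
vanishes when `λ` has more than `k` parts. -/
noncomputable def PdenSum (q : ℝ) (m k : ℕ) : ℝ :=
  ∑ l : m.Partition, gaussBinom q⁻¹ k (card l.parts) * qPoch q (card l.parts) / Pden q l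

theorem PdenSum_zero_right {m : ℕ} (hm : m ≠ 0) : PdenSum q m 0 = 0 :=
  sum_eq_zero fun l _ => by
    rw [gaussBinom_eq_zero_of_lt _ (Nat.pos_of_ne_zero (card_parts_ne_zero hm l)), zero_mul,
      zero_div]

theorem sum_one_div_Pden_filter_card_eq (hq : 1 < q) {i j m : ℕ} (hm : i + j = m) :
    ∑ l ∈ univ.filter (fun l : m.Partition => card l.parts = j), 1 / Pden q l =
      q⁻¹ ^ j ^ 2 / qPoch q j * PdenSum q i j := by
  subst hm
  rw [PdenSum, mul_sum, ← sum_filter_of_ne (p := fun ν : i.Partition => card ν.parts ≤ j)]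
  · refine sum_bij' (fun l hl => removeColumn l (mem_filter.1 hl).2)
      (fun ν hν => addColumn ν (mem_filter.1 hν).2) ?_ ?_ ?_ ?_ ?_
    · exact fun l _ => mem_filter.2 ⟨mem_univ _, card_removeColumn_le _ _⟩
    · exact fun ν _ => mem_filter.2 ⟨mem_univ _, card_addColumn _ _⟩
    · exact fun l _ => addColumn_removeColumn _ _
    · exact fun ν _ => removeColumn_addColumn _ _
    · intro l _
      rw [← one_div_Pden_addColumn _ (card_removeColumn_le _ _) hq, addColumn_removeColumn]
  · intro ν _ hν
    by_contra hcard
    rw [gaussBinom_eq_zero_of_lt _ (not_le.1 hcard)] at hν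
    simp at hν

theorem sum_div_Pden_eq_sum_antidiagonal (hq : 1 < q) (w : ℕ → ℝ) (m : ℕ) :
    ∑ l : m.Partition, w (card l.parts) / Pden q l =
      ∑ p ∈ antidiagonal m, w p.2 * (q⁻¹ ^ p.2 ^ 2 / qPoch q p.2 * PdenSum q p.1 p.2) := by
  rw [← sum_fiberwise_of_maps_to (g := fun l : m.Partition => (m - card l.parts, card l.parts))
    (t := antidiagonal m) fun l _ => by simp [card_parts_le l]]
  refine sum_congr rfl fun p hp => ?_
  rw [Finset.HasAntidiagonal.mem_antidiagonal] at hp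
  rw [← sum_one_div_Pden_filter_card_eq hq hp, mul_sum]
  refine sum_congr (filter_congr fun l _ => ?_) fun l hl => ?_
  · rw [Prod.ext_iff]
    exact ⟨And.right, fun h => ⟨by omega, h⟩⟩
  · rw [(mem_filter.1 hl).2, mul_one_div]

theorem PdenSum_eq (hq : 1 < q) (m k : ℕ) :
    PdenSum q m k = q⁻¹ ^ m * gaussBinom q⁻¹ (m + k - 1) m := by
  induction m using Nat.strong_induction_on generalizing k with
  | _ m ih =>
    rcases Nat.eq_zero_or_pos m with rfl | hm
    · simp [PdenSum, Pden]
    rw [PdenSum, sum_div_Pden_eq_sum_antidiagonal hq (fun j => gaussBinom q⁻¹ k j * qPoch q j),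
      show m + k - 1 = m - 1 + k by omega, gaussBinom_add, mul_sum]
    refine sum_congr rfl fun ⟨i, j⟩ hij => ?_
    rw [Finset.HasAntidiagonal.mem_antidiagonal] at hij
    subst hij
    dsimp only at ih hm ⊢
    rcases j with _ | j
    · rw [add_zero] at hm ⊢
      rw [PdenSum_zero_right hm.ne', gaussBinom_eq_zero_of_lt _ (Nat.sub_one_lt hm.ne')]
      simp
    · rw [ih i (by omega), show i + (j + 1) - 1 = i + j by omega, Nat.add_sub_cancel_left]
      have := (qPoch_pos hq (j + 1)).ne'
      field_simp
      ring

theorem sum_antidiagonal_eq_inv_pow_div_qPoch (hq : 1 < q) (n : ℕ) :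
    ∑ p ∈ antidiagonal n, q⁻¹ ^ p.2 ^ 2 / qPoch q p.2 *
      (q⁻¹ ^ p.1 * gaussBinom q⁻¹ (p.1 + p.2 - 1) p.1) = q⁻¹ ^ n / qPoch q n := by
  rcases n with _ | N
  · simp
  have hterm : ∀ p ∈ antidiagonal N, q⁻¹ ^ (p.2 + 1) ^ 2 / qPoch q (p.2 + 1) *
      (q⁻¹ ^ p.1 * gaussBinom q⁻¹ (p.1 + (p.2 + 1) - 1) p.1) =
        q⁻¹ ^ (N + 1) *
          (q⁻¹ ^ (p.2 * (p.2 + 1)) / qPoch q (p.2 + 1) * gaussBinom q⁻¹ N p.2) := by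
    rintro ⟨i, j⟩ hij
    rw [Finset.HasAntidiagonal.mem_antidiagonal] at hij
    subst hij
    dsimp only
    rw [show i + (j + 1) - 1 = i + j by omega, ← gaussBinom_symm hq (Nat.le_add_left j i),
      Nat.add_sub_cancel]
    ring
  rw [Finset.Nat.sum_antidiagonal_succ',
    gaussBinom_eq_zero_of_lt _ (by omega : N + 1 + 0 - 1 < N + 1), mul_zero, mul_zero, zero_add,
    sum_congr rfl hterm, ← mul_sum, ← Finset.Nat.sum_antidiagonal_swap,
    Finset.Nat.sum_antidiagonal_eq_sum_range_succ_mk]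
  simp only [Prod.swap]
  rw [sum_range_pow_div_qPoch_mul_gaussBinom hq N 1]
  ring

end PdenSum

theorem stmt11 (q : ℝ) (hq : 1 < q) (n : ℕ) :
    ∑ l : n.Partition, 1 / Pden q l = 1 / (q^n * qPoch q n) := by
  have hsum := sum_div_Pden_eq_sum_antidiagonal hq (fun _ => 1) n
  simp only [one_mul, PdenSum_eq hq] at hsum
  rw [hsum, sum_antidiagonal_eq_inv_pow_div_qPoch hq, inv_pow, one_div, mul_inv, div_eq_mul_inv]
end
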